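/- arXiv:2603.24091 — 5 statements merged into one kernel-verified Lean document; each statement's English description precedes it below -/
import Mathlib

section
/- Let n ≥ 1, let f : ℝⁿ × ℝⁿ → ℝ be continuously differentiable, let K ⊆ ℝⁿ be a nonempty compact set, and define F : ℝⁿ → ℝ by F(x) = min_{y ∈ K} f(x, y). If F is differentiable at a point x, then for any y_x ∈ K with f(x, y_x) = F(x) one has ‖∇F(x)‖ ≤ ‖∇_x f(x, y_x)‖, where ∇_x f(x, y_x) denotes the gradient of the map z ↦ f(z, y_x) at z = x. -/
/-! `F ≤ f(·, yₓ)` everywhere, with equality at `x`, so `f(·, yₓ) - F` has a minimum at `x`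
and the two derivatives coincide there; the inequality is in fact an equality. -/

open Filter Topology

theorem fderiv_eq_of_eventuallyLE_of_eq {E : Type*} [NormedAddCommGroup E] [NormedSpace ℝ E]
    {F g : E → ℝ} {x : E} (hF : DifferentiableAt ℝ F x)
    (hg : DifferentiableAt ℝ g x) (hle : F ≤ᶠ[𝓝 x] g) (heq : F x = g x) :
    fderiv ℝ F x = fderiv ℝ g x := by
  have hmin : IsLocalMin (g - F) x := by
    filter_upwards [hle] with z hz
    rw [Pi.sub_apply, Pi.sub_apply, heq, sub_self]
    exact sub_nonneg.mpr hz
  have hzero := hmin.fderiv_eq_zero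
  rw [fderiv_sub hg hF, sub_eq_zero] at hzero
  exact hzero.symm

theorem gradient_eq_of_eventuallyLE_of_eq {E : Type*} [NormedAddCommGroup E]
    [InnerProductSpace ℝ E] [CompleteSpace E] {F g : E → ℝ} {x : E}
    (hF : DifferentiableAt ℝ F x) (hg : DifferentiableAt ℝ g x) (hle : F ≤ᶠ[𝓝 x] g)
    (heq : F x = g x) : gradient F x = gradient g x := by
  rw [gradient, gradient, fderiv_eq_of_eventuallyLE_of_eq hF hg hle heq]

theorem IsCompact.sInf_image_le {α : Type*} [TopologicalSpace α] {K : Set α}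
    (hK : IsCompact K) {φ : α → ℝ} (hφ : ContinuousOn φ K) {y : α} (hy : y ∈ K) :
    sInf (φ '' K) ≤ φ y :=
  csInf_le (hK.bddBelow_image hφ) (Set.mem_image_of_mem φ hy)

theorem stmt_1_general (n : ℕ)
    (f : EuclideanSpace ℝ (Fin n) × EuclideanSpace ℝ (Fin n) → ℝ)
    (hf : ContDiff ℝ 1 f)
    (K : Set (EuclideanSpace ℝ (Fin n))) (hK : IsCompact K)
    (F : EuclideanSpace ℝ (Fin n) → ℝ)
    (hF : ∀ x, F x = sInf ((fun y => f (x, y)) '' K))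
    (x : EuclideanSpace ℝ (Fin n)) (hFx : DifferentiableAt ℝ F x)
    (yx : EuclideanSpace ℝ (Fin n)) (hyx : yx ∈ K) (hmin : f (x, yx) = F x) :
    ‖gradient F x‖ ≤ ‖gradient (fun z => f (z, yx)) x‖ := by
  have hgx : DifferentiableAt ℝ (fun z => f (z, yx)) x :=
    (hf.differentiable one_ne_zero (x, yx)).comp x
      (differentiableAt_id.prodMk (differentiableAt_const yx))
  have hle : ∀ z, F z ≤ f (z, yx) := fun z =>
    (hF z).trans_le <|
      hK.sInf_image_le (hf.continuous.comp (Continuous.prodMk_right z)).continuousOn hyx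
  rw [gradient_eq_of_eventuallyLE_of_eq hFx hgx (Eventually.of_forall hle) hmin.symm]

/-- Lemma 6.2 (weak Danskin): if `F x = min_{y ∈ K} f (x, y)` is differentiable at `x`
and the minimum is attained at `yₓ ∈ K`, then `‖∇F(x)‖ ≤ ‖∇ₓ f(x, yₓ)‖`. -/
theorem stmt_1 (n : ℕ) (hn : 1 ≤ n)
    (f : EuclideanSpace ℝ (Fin n) × EuclideanSpace ℝ (Fin n) → ℝ)
    (hf : ContDiff ℝ 1 f)
    (K : Set (EuclideanSpace ℝ (Fin n))) (hK : IsCompact K) (hKne : K.Nonempty)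
    (F : EuclideanSpace ℝ (Fin n) → ℝ)
    (hF : ∀ x, F x = sInf ((fun y => f (x, y)) '' K))
    (x : EuclideanSpace ℝ (Fin n)) (hFx : DifferentiableAt ℝ F x)
    (yx : EuclideanSpace ℝ (Fin n)) (hyx : yx ∈ K) (hmin : f (x, yx) = F x) :
    ‖gradient F x‖ ≤ ‖gradient (fun z => f (z, yx)) x‖ :=
  stmt_1_general n f hf K hK F hF x hFx yx hyx hmin
end

section
/- Let n ≥ 1 be an integer. For δ > 0 define ψ_δ : ℝⁿ × [−1/(4n), 0] → ℝ by ψ_δ(x, t) = (t + 1/(4n) + δ)^{−n/2} · exp(−‖x‖²/(4(t + 1/(4n) + δ))) − e^{−8n}·t − e^{−8n}·(1/(4n) + δ)^{−n/2}. Then there exists δ₀ ∈ (0, 1/(4n)] such that for all δ ∈ (0, δ₀]: (i) ψ_δ(x, t) < 0 whenever ‖x‖ = 4 and −1/(4n) ≤ t ≤ 0; and (ii) ψ_δ(x, −1/(4n)) < 0 whenever 1/32 ≤ ‖x‖ ≤ 4. -/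
/-!
On the lateral boundary `‖x‖ = 4` the kernel term is `s ^ (-n/2) * exp (-4 / s)` with
`s = t + 1/(4n) + δ`. This is increasing in `s` for `s ≤ 8/n`, so it is at most its value at
`S = 1/(4n) + δ`, where `4 / S ≥ 8n + 1` gives `exp (-4 / S) ≤ exp (-1) * exp (-8n)`; the last
term `exp (-8n) * S ^ (-n/2)`, with `S ^ (-n/2) ≥ 1`, beats it together with `-exp (-8n) * t`.

At `t = -1/(4n)` the kernel is `δ ^ (-n/2) * exp (-‖x‖² / (4δ))`, and `exp u ≥ u ^ n / n!` bounds it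
by `(4096 n √δ) ^ n` when `‖x‖ ≥ 1/32`; this is at most `exp (-8n) / 2` once
`√δ ≤ exp (-8) / (8192 n)`, which fixes `δ₀`.
-/

open Real Nat

theorem rpow_neg_mul_exp_neg_div_le_of_le {k c s S : ℝ} (hk : 0 ≤ k) (hs : 0 < s) (hsS : s ≤ S)
    (hkS : k * S ≤ c) : s ^ (-k) * exp (-c / s) ≤ S ^ (-k) * exp (-c / S) := by
  have hS : 0 < S := hs.trans_le hsS
  have hratio : (S / s) ^ k ≤ exp (k * (S / s - 1)) := by
    rw [mul_comm, exp_mul]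
    exact rpow_le_rpow (by positivity) (by linarith [add_one_le_exp (S / s - 1)]) hk
  have hexponent : k * (S / s - 1) - c / s ≤ -c / S := by
    have : k * (S / s - 1) - c / s + c / S = (k * S - c) * (S - s) / (s * S) := by
      field_simp; ring
    have : (k * S - c) * (S - s) / (s * S) ≤ 0 :=
      div_nonpos_of_nonpos_of_nonneg (mul_nonpos_of_nonpos_of_nonneg (by linarith) (by linarith))
        (by positivity)
    rw [neg_div]; linarith
  calc s ^ (-k) * exp (-c / s) = S ^ (-k) * ((S / s) ^ k * exp (-c / s)) := by
        rw [div_rpow hS.le hs.le, rpow_neg hs.le, rpow_neg hS.le]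
        field_simp
    _ ≤ S ^ (-k) * (exp (k * (S / s - 1)) * exp (-c / s)) := by gcongr
    _ = S ^ (-k) * exp (k * (S / s - 1) - c / s) := by rw [← exp_add, neg_div, ← sub_eq_add_neg]
    _ ≤ S ^ (-k) * exp (-c / S) := by gcongr

theorem rpow_neg_mul_exp_neg_div_le_pow (n : ℕ) {c δ : ℝ} (hc : 0 < c) (hδ : 0 < δ) :
    δ ^ (-(n : ℝ) / 2) * exp (-c / δ) ≤ (n * √δ / c) ^ n := by
  have hexp : exp (-c / δ) ≤ (n * δ / c) ^ n := by
    have hfact : (c / δ) ^ n / n ! ≤ exp (c / δ) := pow_div_factorial_le_exp _ (by positivity) n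
    calc exp (-c / δ) = (exp (c / δ))⁻¹ := by rw [neg_div, exp_neg]
      _ ≤ ((c / δ) ^ n / n !)⁻¹ := by gcongr
      _ = n ! * (δ / c) ^ n := by rw [inv_div, div_pow, div_pow]; field_simp
      _ ≤ (n : ℝ) ^ n * (δ / c) ^ n := by gcongr; exact_mod_cast Nat.factorial_le_pow n
      _ = (n * δ / c) ^ n := by rw [← mul_pow, mul_div_assoc]
  have hsqrt : δ ^ (-(n : ℝ) / 2) * δ ^ n = √δ ^ n := by
    rw [sqrt_eq_rpow, ← rpow_natCast, ← rpow_natCast, ← rpow_mul hδ.le, ← rpow_add hδ]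
    ring_nf
  calc δ ^ (-(n : ℝ) / 2) * exp (-c / δ) ≤ δ ^ (-(n : ℝ) / 2) * (n * δ / c) ^ n := by gcongr
    _ = (n * √δ / c) ^ n := by rw [div_pow, mul_pow, div_pow, mul_pow, ← hsqrt]; ring

theorem neg_natCast_div_two_nonpos {n : ℕ} : -(n : ℝ) / 2 ≤ 0 :=
  div_nonpos_of_nonpos_of_nonneg (neg_nonpos.2 n.cast_nonneg) zero_le_two

theorem barrier_neg_on_lateral {E : Type*} [NormedAddCommGroup E] {n : ℕ} {a δ t : ℝ}
    (ha : a ≤ 1 / 4) (hδ : 0 < δ) (hS1 : a + δ ≤ 1) (hS : (8 * n + 1) * (a + δ) ≤ 4)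
    (ht : -a ≤ t) (ht0 : t ≤ 0) {x : E} (hx : ‖x‖ = 4) :
    (t + a + δ) ^ (-(n : ℝ) / 2) * exp (-‖x‖ ^ 2 / (4 * (t + a + δ)))
      - exp (-8 * n) * t - exp (-8 * n) * (a + δ) ^ (-(n : ℝ) / 2) < 0 := by
  set S := a + δ
  set P := S ^ (-(n : ℝ) / 2)
  have hs : 0 < t + a + δ := by linarith
  have hSpos : 0 < S := by linarith
  have hP : 1 ≤ P := one_le_rpow_of_pos_of_le_one_of_nonpos hSpos hS1 neg_natCast_div_two_nonpos
  have hexpS : exp (-4 / S) ≤ exp (-1) * exp (-8 * n) := by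
    rw [← exp_add, exp_le_exp, neg_div, neg_le, le_div_iff₀ hSpos]
    linarith
  have hterm : (t + a + δ) ^ (-(n : ℝ) / 2) * exp (-‖x‖ ^ 2 / (4 * (t + a + δ)))
      ≤ P * exp (-8 * n) / 2 := by
    have hmono := rpow_neg_mul_exp_neg_div_le_of_le (k := n / 2) (c := 4) (S := S)
      (by positivity) hs (by linarith) (by nlinarith)
    rw [← neg_div] at hmono
    calc (t + a + δ) ^ (-(n : ℝ) / 2) * exp (-‖x‖ ^ 2 / (4 * (t + a + δ)))
        = (t + a + δ) ^ (-(n : ℝ) / 2) * exp (-4 / (t + a + δ)) := by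
          rw [hx]; congr 2; field_simp
      _ ≤ P * (exp (-1) * exp (-8 * n)) := hmono.trans (by gcongr)
      _ ≤ P * (1 / 2 * exp (-8 * n)) := by gcongr; exact exp_neg_one_lt_half.le
      _ = P * exp (-8 * n) / 2 := by ring
  nlinarith [exp_pos (-8 * n)]

theorem barrier_neg_on_initial {E : Type*} [NormedAddCommGroup E] {n : ℕ} (hn : 1 ≤ n) {a δ : ℝ}
    (ha₀ : 0 ≤ a) (ha : a ≤ 1 / 4) (hδ : 0 < δ) (hS1 : a + δ ≤ 1)
    (hδsmall : 8192 * n * √δ ≤ exp (-8)) {x : E} (hx : 1 / 32 ≤ ‖x‖) :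
    (-a + a + δ) ^ (-(n : ℝ) / 2) * exp (-‖x‖ ^ 2 / (4 * (-a + a + δ)))
      - exp (-8 * n) * (-a) - exp (-8 * n) * (a + δ) ^ (-(n : ℝ) / 2) < 0 := by
  simp only [neg_add_cancel, zero_add]
  set P := (a + δ) ^ (-(n : ℝ) / 2)
  have hP : 1 ≤ P :=
    one_le_rpow_of_pos_of_le_one_of_nonpos (by linarith) hS1 neg_natCast_div_two_nonpos
  have hexponent : -‖x‖ ^ 2 / (4 * δ) ≤ -(1 / 4096) / δ := by
    have hx2 : 1 / 1024 ≤ ‖x‖ ^ 2 := by nlinarith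
    rw [neg_div, neg_div, neg_le_neg_iff, div_le_div_iff₀ hδ (by positivity)]
    nlinarith
  have hterm : δ ^ (-(n : ℝ) / 2) * exp (-‖x‖ ^ 2 / (4 * δ)) ≤ exp (-8 * n) / 2 := calc
    δ ^ (-(n : ℝ) / 2) * exp (-‖x‖ ^ 2 / (4 * δ))
        ≤ δ ^ (-(n : ℝ) / 2) * exp (-(1 / 4096) / δ) := by gcongr
    _ ≤ (n * √δ / (1 / 4096)) ^ n := rpow_neg_mul_exp_neg_div_le_pow n (by norm_num) hδ
    _ ≤ (exp (-8) / 2) ^ n := pow_le_pow_left₀ (by positivity) (by linarith) n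
    _ = exp (-8 * n) / 2 ^ n := by rw [div_pow, ← exp_nat_mul, mul_comm]
    _ ≤ exp (-8 * n) / 2 := by gcongr; exact le_self_pow₀ one_le_two (by omega)
  nlinarith [exp_pos (-8 * n)]

/-- Negativity of the barrier (formula (eq:macro-2) in the proof of Lemma 4.4):
there is `δ₀ ∈ (0, 1/(4n)]` such that for all `δ ∈ (0, δ₀]` the function `ψ_δ` is
negative on the lateral boundary `‖x‖ = 4`, `-1/(4n) ≤ t ≤ 0`, and on the initial
annulus `1/32 ≤ ‖x‖ ≤ 4`, `t = -1/(4n)`. -/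
theorem stmt_6 (n : ℕ) (hn : 1 ≤ n) :
    ∃ δ₀ : ℝ, 0 < δ₀ ∧ δ₀ ≤ 1 / (4 * (n : ℝ)) ∧
      ∀ δ : ℝ, 0 < δ → δ ≤ δ₀ →
        (∀ (x : EuclideanSpace ℝ (Fin n)) (t : ℝ), ‖x‖ = 4 →
            -(1 / (4 * (n : ℝ))) ≤ t → t ≤ 0 →
          (t + 1 / (4 * (n : ℝ)) + δ) ^ (-(n : ℝ) / 2) *
              Real.exp (-‖x‖ ^ 2 / (4 * (t + 1 / (4 * (n : ℝ)) + δ)))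
            - Real.exp (-8 * (n : ℝ)) * t
            - Real.exp (-8 * (n : ℝ)) * (1 / (4 * (n : ℝ)) + δ) ^ (-(n : ℝ) / 2) < 0) ∧
        (∀ x : EuclideanSpace ℝ (Fin n), 1 / 32 ≤ ‖x‖ → ‖x‖ ≤ 4 →
          (-(1 / (4 * (n : ℝ))) + 1 / (4 * (n : ℝ)) + δ) ^ (-(n : ℝ) / 2) *
              Real.exp (-‖x‖ ^ 2 / (4 * (-(1 / (4 * (n : ℝ))) + 1 / (4 * (n : ℝ)) + δ)))
            - Real.exp (-8 * (n : ℝ)) * (-(1 / (4 * (n : ℝ))))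
            - Real.exp (-8 * (n : ℝ)) * (1 / (4 * (n : ℝ)) + δ) ^ (-(n : ℝ) / 2) < 0) := by
  have hn' : (1 : ℝ) ≤ n := by exact_mod_cast hn
  set a : ℝ := 1 / (4 * n) with ha_def
  have hna : n * a = 1 / 4 := by rw [ha_def]; field_simp
  have ha₀ : 0 ≤ a := by positivity
  have ha : a ≤ 1 / 4 := by nlinarith
  set η := exp (-8) / (8192 * n) with hη_def
  have hη : 0 < η := by positivity
  have hnη_eq : 8192 * n * η = exp (-8) := by rw [hη_def]; field_simp
  have hnη : n * η ≤ 1 / 8192 := by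
    linarith [exp_le_one_iff.2 (by norm_num : (-8 : ℝ) ≤ 0)]
  have hηn : η ≤ n * η := le_mul_of_one_le_left hη.le hn'
  refine ⟨η ^ 2, by positivity, ?_, fun δ hδ hδη => ?_⟩
  · rw [le_div_iff₀ (by positivity)]
    nlinarith
  have hnδ : n * δ ≤ 1 / 8192 := by nlinarith
  have hsqrt : √δ ≤ η := sqrt_le_sqrt hδη |>.trans_eq (sqrt_sq hη.le)
  have hS1 : a + δ ≤ 1 := by nlinarith
  refine ⟨fun x t hx ht ht0 => barrier_neg_on_lateral ha hδ hS1 ?_ ht ht0 hx,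
    fun x hx _ => barrier_neg_on_initial hn ha₀ ha hδ hS1 ?_ hx⟩
  · nlinarith
  · exact (by gcongr : 8192 * n * √δ ≤ 8192 * n * η).trans_eq hnη_eq
end

section
/- Let n ≥ 1 be an integer and let σ ∈ (0, 1/(8n)). For every δ > 0 define ψ_δ(x, t) = (t + 1/(4n) + δ)^{−n/2} · exp(−‖x‖²/(4(t + 1/(4n) + δ))) − e^{−8n}·t − e^{−8n}·(1/(4n) + δ)^{−n/2}. Then for every δ > 0 and every (x, t) with ‖x‖ ≤ 2 and −σ ≤ t ≤ 0, one has ψ_δ(x, t) > 0. -/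
/-!
On the slab `-σ ≤ t ≤ 0` the time argument `s = t + 1/(4n) + δ` of the heat kernel lies in
`(1/(8n), 1/(4n) + δ]`. Since `s ↦ s^(-n/2)` is decreasing, the prefactor is at least
`(1/(4n) + δ)^(-n/2)`, and since `‖x‖² ≤ 4 < 32 n s`, the Gaussian factor exceeds `e^{-8n}`.
So the kernel beats the constant term `e^{-8n} (1/(4n) + δ)^(-n/2)`, while `-e^{-8n} t ≥ 0`.
-/

open Real

noncomputable def heatKernel {E : Type*} [NormedAddCommGroup E] (d : ℝ) (x : E) (s : ℝ) : ℝ :=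
  s ^ (-d / 2) * exp (-‖x‖ ^ 2 / (4 * s))

section HeatKernel

variable {E : Type*} [NormedAddCommGroup E] {d m s T : ℝ} {x : E}

lemma exp_neg_lt_exp_neg_sq_div (hs : 0 < s) (hx : ‖x‖ ^ 2 < 4 * m * s) :
    exp (-m) < exp (-‖x‖ ^ 2 / (4 * s)) := by
  rw [exp_lt_exp, neg_div, neg_lt_neg_iff, div_lt_iff₀ (by positivity)]
  linarith

lemma rpow_mul_exp_neg_lt_heatKernel (hd : 0 ≤ d) (hs : 0 < s) (hsT : s ≤ T)
    (hx : ‖x‖ ^ 2 < 4 * m * s) :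
    T ^ (-d / 2) * exp (-m) < heatKernel d x s := by
  have h_prefactor : T ^ (-d / 2) ≤ s ^ (-d / 2) :=
    rpow_le_rpow_of_nonpos hs hsT (by linarith)
  exact mul_lt_mul' h_prefactor (exp_neg_lt_exp_neg_sq_div hs hx) (exp_pos _).le
    (rpow_pos_of_pos hs _)

end HeatKernel

theorem stmt_7_general (n : ℕ) (σ : ℝ) (hσ₁ : σ < 1 / (8 * (n : ℝ))) :
    ∀ δ : ℝ, 0 < δ →
      ∀ (x : EuclideanSpace ℝ (Fin n)) (t : ℝ), ‖x‖ ≤ 2 → -σ ≤ t → t ≤ 0 →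
        0 < (t + 1 / (4 * (n : ℝ)) + δ) ^ (-(n : ℝ) / 2) *
              Real.exp (-‖x‖ ^ 2 / (4 * (t + 1 / (4 * (n : ℝ)) + δ)))
            - Real.exp (-8 * (n : ℝ)) * t
            - Real.exp (-8 * (n : ℝ)) * (1 / (4 * (n : ℝ)) + δ) ^ (-(n : ℝ) / 2) := by
  intro δ hδ x t hx hσt ht
  set s := t + 1 / (4 * (n : ℝ)) + δ
  have h_quarter : 1 / (4 * (n : ℝ)) = 2 * (1 / (8 * (n : ℝ))) := by ring
  -- the slab `-σ ≤ t ≤ 0` being nonempty forces `0 ≤ σ < 1/(8n)`, hence `n > 0`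
  have h_eighth_pos : 0 < 1 / (8 * (n : ℝ)) := by linarith
  have hn : (0 : ℝ) < n := by linarith [one_div_pos.mp h_eighth_pos]
  have hs : 1 / (8 * (n : ℝ)) < s := by simp only [s]; linarith
  have hx_sq : ‖x‖ ^ 2 < 4 * (8 * n) * s := by
    have h_one : 1 < 8 * (n : ℝ) * s := by
      rwa [← div_lt_iff₀' (by positivity)]
    nlinarith [norm_nonneg x]
  have key := rpow_mul_exp_neg_lt_heatKernel (d := n) (by positivity) (by linarith)
    (show s ≤ 1 / (4 * (n : ℝ)) + δ by simp only [s]; linarith) hx_sq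
  have h_drift : exp (-8 * (n : ℝ)) * t ≤ 0 := mul_nonpos_of_nonneg_of_nonpos (exp_pos _).le ht
  rw [heatKernel, ← neg_mul] at key
  linarith

/-- Positivity of the barrier (formula (eq:macro-3) in the proof of Lemma 4.4):
for `σ ∈ (0, 1/(8n))` and every `δ > 0`, the function `ψ_δ` is positive on
`‖x‖ ≤ 2`, `-σ ≤ t ≤ 0`. -/
theorem stmt_7 (n : ℕ) (hn : 1 ≤ n) (σ : ℝ) (hσ₀ : 0 < σ) (hσ₁ : σ < 1 / (8 * (n : ℝ))) :
    ∀ δ : ℝ, 0 < δ →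
      ∀ (x : EuclideanSpace ℝ (Fin n)) (t : ℝ), ‖x‖ ≤ 2 → -σ ≤ t → t ≤ 0 →
        0 < (t + 1 / (4 * (n : ℝ)) + δ) ^ (-(n : ℝ) / 2) *
              Real.exp (-‖x‖ ^ 2 / (4 * (t + 1 / (4 * (n : ℝ)) + δ)))
            - Real.exp (-8 * (n : ℝ)) * t
            - Real.exp (-8 * (n : ℝ)) * (1 / (4 * (n : ℝ)) + δ) ^ (-(n : ℝ) / 2) :=
  stmt_7_general n σ hσ₁
end

section
/- Let n ≥ 1, let x, y₁ ∈ ℝⁿ, let R > 0 and 0 < ρ ≤ R, and assume ‖x − y₁‖ < R. Then there exists y₂ ∈ ℝⁿ with ‖y₂ − x‖ ≤ ρ such that the open ball B_{ρ/16}(y₂) is contained in B_{3ρ/8}(x) ∩ B_{R − ρ/4}(y₁). Moreover, for any t_k ∈ ℝ, setting t₁ = t_k + R², every pair (ỹ, t̃) with ỹ ∈ B_{ρ/16}(y₂) and ρ²/4 − ρ²/256 < t̃ − t_k ≤ ρ²/4 satisfies ‖ỹ − x‖² < t̃ − t_k < ρ² and ‖ỹ − y₁‖² < t₁ − t̃.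 -/
/-!
Take `y₂` on the segment from `x` towards `y₁`, at distance `5ρ/16` from `x` (or `y₂ = y₁` if
`y₁` is closer). Then `ρ/16 + ‖y₂ - x‖ ≤ 3ρ/8` and `ρ/16 + ‖y₂ - y₁‖ ≤ R - ρ/4`, which gives the
inclusion of balls. The time inequalities follow from `(3ρ/8)² < ρ²/4 - ρ²/256` and
`(R - ρ/4)² < R² - ρ²/4`, the latter using `ρ ≤ R`.
-/

open AffineMap Metric

theorem exists_dist_le_and_dist_eq_max_sub {V P : Type*} [NormedAddCommGroup V]
    [NormedSpace ℝ V] [MetricSpace P] [NormedAddTorsor V P] (x y : P) {r : ℝ} (hr : 0 ≤ r) :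
    ∃ z : P, dist z x ≤ r ∧ dist z y = max (dist x y - r) 0 := by
  rcases le_or_gt (dist x y) r with hle | hlt
  · exact ⟨y, by rwa [dist_comm], by simp [hle]⟩
  · have hd : 0 < dist x y := hr.trans_lt hlt
    have hc : r / dist x y ≤ 1 := (div_le_one hd).2 hlt.le
    refine ⟨lineMap x y (r / dist x y), ?_, ?_⟩
    · rw [dist_lineMap_left, Real.norm_of_nonneg (by positivity), div_mul_cancel₀ _ hd.ne']
    · rw [dist_lineMap_right, Real.norm_of_nonneg (by linarith), sub_mul, one_mul,
        div_mul_cancel₀ _ hd.ne', max_eq_left (by linarith)]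

theorem stmt_9_general (n : ℕ)
    (x y₁ : EuclideanSpace ℝ (Fin n)) (R ρ : ℝ)
    (hρ₀ : 0 < ρ) (hρR : ρ ≤ R) (hxy : ‖x - y₁‖ < R) :
    ∃ y₂ : EuclideanSpace ℝ (Fin n), ‖y₂ - x‖ ≤ ρ ∧
      Metric.ball y₂ (ρ / 16) ⊆ Metric.ball x (3 * ρ / 8) ∩ Metric.ball y₁ (R - ρ / 4) ∧
      ∀ (tk : ℝ) (ytil : EuclideanSpace ℝ (Fin n)) (ttil : ℝ),
        ytil ∈ Metric.ball y₂ (ρ / 16) →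
        ρ ^ 2 / 4 - ρ ^ 2 / 256 < ttil - tk → ttil - tk ≤ ρ ^ 2 / 4 →
        ‖ytil - x‖ ^ 2 < ttil - tk ∧ ttil - tk < ρ ^ 2 ∧
          ‖ytil - y₁‖ ^ 2 < (tk + R ^ 2) - ttil := by
  rw [← dist_eq_norm] at hxy
  obtain ⟨y₂, hy₂x, hy₂y₁_eq⟩ :=
    exists_dist_le_and_dist_eq_max_sub x y₁ (r := 5 * ρ / 16) (by positivity)
  have hy₂y₁ : dist y₂ y₁ ≤ R - 5 * ρ / 16 := by
    rw [hy₂y₁_eq, max_le_iff]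
    constructor <;> linarith
  have hball : ball y₂ (ρ / 16) ⊆ ball x (3 * ρ / 8) ∩ ball y₁ (R - ρ / 4) :=
    Set.subset_inter (ball_subset_ball' (by linarith)) (ball_subset_ball' (by linarith))
  refine ⟨y₂, by rw [← dist_eq_norm]; linarith, hball, fun tk ytil ttil hytil hlo hhi => ?_⟩
  obtain ⟨hytil_x, hytil_y₁⟩ := hball hytil
  rw [mem_ball, dist_eq_norm] at hytil_x hytil_y₁
  refine ⟨by nlinarith [norm_nonneg (ytil - x)], by nlinarith, ?_⟩
  nlinarith [norm_nonneg (ytil - y₁)]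

/-- Geometric inclusion (formulas (eq:weak-harnack-2), (eq:weak-harnack-3)) from the
proof of the weak Harnack inequality (Proposition 4.6). -/
theorem stmt_9 (n : ℕ) (hn : 1 ≤ n)
    (x y₁ : EuclideanSpace ℝ (Fin n)) (R ρ : ℝ)
    (hR : 0 < R) (hρ₀ : 0 < ρ) (hρR : ρ ≤ R) (hxy : ‖x - y₁‖ < R) :
    ∃ y₂ : EuclideanSpace ℝ (Fin n), ‖y₂ - x‖ ≤ ρ ∧
      Metric.ball y₂ (ρ / 16) ⊆ Metric.ball x (3 * ρ / 8) ∩ Metric.ball y₁ (R - ρ / 4) ∧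
      ∀ (tk : ℝ) (ytil : EuclideanSpace ℝ (Fin n)) (ttil : ℝ),
        ytil ∈ Metric.ball y₂ (ρ / 16) →
        ρ ^ 2 / 4 - ρ ^ 2 / 256 < ttil - tk → ttil - tk ≤ ρ ^ 2 / 4 →
        ‖ytil - x‖ ^ 2 < ttil - tk ∧ ttil - tk < ρ ^ 2 ∧
          ‖ytil - y₁‖ ^ 2 < (tk + R ^ 2) - ttil :=
  stmt_9_general n x y₁ R ρ hρ₀ hρR hxy
end

section
/- Let n ≥ 1 and let u, v : ℝⁿ → ℝ be continuously differentiable. Define d : ℝⁿ → ℝ by d(x) = inf_{y ∈ ℝⁿ} √(‖x − y‖² + (u(x) − v(y))²). Suppose that at a point x the function d is differentiable, d(x) > 0, and the infimum is attained at some y ∈ ℝⁿ. Then ‖∇d(x)‖ ≤ ‖∇u(x) − ∇v(y)‖. -/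
/-!
Write `f z w = √(‖z - w‖² + (u z - v w)²)` and `c = u x - v y`, so that `d ≤ f` everywhere with
`d x = f x y`. Since `d` touches `f · y` from below at `x`, the two have the same derivative there:
`∇d(x) = (x - y + c ∇u(x)) / d(x)`. The first-order condition at the minimizer `y` of `f x ·`
gives `x - y = -c ∇v(y)`, hence `∇d(x) = (c / d(x)) (∇u(x) - ∇v(y))`, and `|c| ≤ f x y = d x`.
-/

open Filter Topology InnerProductSpace

theorem HasFDerivAt.eq_of_eventually_le_of_eq {E : Type*} [NormedAddCommGroup E]
    [NormedSpace ℝ E] {f g : E → ℝ} {f' g' : StrongDual ℝ E} {x : E}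
    (hf : HasFDerivAt f f' x) (hg : HasFDerivAt g g' x)
    (hle : ∀ᶠ z in 𝓝 x, f z ≤ g z) (heq : f x = g x) : f' = g' := by
  have hmin : IsLocalMin (g - f) x :=
    hle.mono fun z hz => by simpa [heq] using hz
  exact (sub_eq_zero.mp (hmin.hasFDerivAt_eq_zero (hg.sub hf))).symm

section SeminormedAddCommGroup

variable {E : Type*} [SeminormedAddCommGroup E]

noncomputable def graphDistSq (u v : E → ℝ) (x y : E) : ℝ := ‖x - y‖ ^ 2 + (u x - v y) ^ 2

noncomputable def graphDist (u v : E → ℝ) (x y : E) : ℝ := √(graphDistSq u v x y)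

variable {u v : E → ℝ} {x y : E}

theorem graphDistSq_nonneg : 0 ≤ graphDistSq u v x y := by
  unfold graphDistSq; positivity

theorem abs_sub_le_graphDist : |u x - v y| ≤ graphDist u v x y :=
  Real.abs_le_sqrt (le_add_of_nonneg_left (sq_nonneg _))

theorem graphDist_le_graphDist_iff {x' y' : E} :
    graphDist u v x y ≤ graphDist u v x' y' ↔ graphDistSq u v x y ≤ graphDistSq u v x' y' :=
  Real.sqrt_le_sqrt_iff graphDistSq_nonneg

end SeminormedAddCommGroup

variable {E : Type*} [NormedAddCommGroup E] [InnerProductSpace ℝ E]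
  {u v : E → ℝ} {u' v' : StrongDual ℝ E} {x y : E}

theorem hasFDerivAt_graphDistSq_left (hu : HasFDerivAt u u' x) :
    HasFDerivAt (graphDistSq u v · y) ((2 : ℝ) • (innerSL ℝ (x - y) + (u x - v y) • u')) x := by
  refine (((hasFDerivAt_id x).sub_const y).norm_sq.add
    ((hu.sub_const (v y)).pow 2)).congr_fderiv ?_
  ext h
  simp [mul_assoc]

theorem hasFDerivAt_graphDistSq_right (hv : HasFDerivAt v v' y) :
    HasFDerivAt (graphDistSq u v x) ((-2 : ℝ) • (innerSL ℝ (x - y) + (u x - v y) • v')) y := by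
  refine (((hasFDerivAt_id y).const_sub x).norm_sq.add
    ((hv.const_sub (u x)).pow 2)).congr_fderiv ?_
  ext h
  simp only [id_eq, map_sub, ContinuousLinearMap.comp_neg, ContinuousLinearMap.comp_id, neg_sub,
    Nat.add_one_sub_one, pow_one, nsmul_eq_mul, Nat.cast_ofNat, smul_neg, add_apply, smul_apply,
    sub_apply, coe_innerSL_apply, neg_apply, smul_eq_mul, mul_assoc, smul_add, neg_smul,
    add_left_inj]
  ring

theorem hasFDerivAt_graphDist_left (hu : HasFDerivAt u u' x) (hpos : 0 < graphDist u v x y) :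
    HasFDerivAt (graphDist u v · y)
      ((graphDist u v x y)⁻¹ • (innerSL ℝ (x - y) + (u x - v y) • u')) x := by
  have hne : graphDistSq u v x y ≠ 0 := fun h => by simp [graphDist, h] at hpos
  refine ((hasFDerivAt_graphDistSq_left (v := v) (y := y) hu).sqrt hne).congr_fderiv ?_
  rw [smul_smul, graphDist]
  congr 1
  field_simp

theorem innerSL_sub_eq_of_isLocalMin (hv : HasFDerivAt v v' y)
    (hmin : IsLocalMin (graphDistSq u v x) y) :
    innerSL ℝ (x - y) = -((u x - v y) • v') :=
  eq_neg_of_add_eq_zero_left <| (smul_eq_zero.mp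
    (hmin.hasFDerivAt_eq_zero (hasFDerivAt_graphDistSq_right hv))).resolve_left (by norm_num)

theorem HasFDerivAt.eq_smul_sub_of_le_graphDist {d : E → ℝ} {d' : StrongDual ℝ E}
    (hd : HasFDerivAt d d' x) (hu : HasFDerivAt u u' x) (hv : HasFDerivAt v v' y)
    (hle : ∀ z w, d z ≤ graphDist u v z w) (heq : d x = graphDist u v x y) (hpos : 0 < d x) :
    d' = ((u x - v y) / d x) • (u' - v') := by
  have hmin : IsLocalMin (graphDistSq u v x) y :=
    Eventually.of_forall fun w => graphDist_le_graphDist_iff.mp (heq ▸ hle x w)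
  have htouch := hd.eq_of_eventually_le_of_eq (hasFDerivAt_graphDist_left hu (heq ▸ hpos))
    (Eventually.of_forall fun z => hle z y) heq
  rw [htouch, innerSL_sub_eq_of_isLocalMin hv hmin, ← heq]
  module

theorem HasFDerivAt.norm_le_of_le_graphDist {d : E → ℝ} {d' : StrongDual ℝ E}
    (hd : HasFDerivAt d d' x) (hu : HasFDerivAt u u' x) (hv : HasFDerivAt v v' y)
    (hle : ∀ z w, d z ≤ graphDist u v z w) (heq : d x = graphDist u v x y) (hpos : 0 < d x) :
    ‖d'‖ ≤ ‖u' - v'‖ := by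
  rw [hd.eq_smul_sub_of_le_graphDist hu hv hle heq hpos, norm_smul]
  refine mul_le_of_le_one_left (norm_nonneg _) ?_
  rw [Real.norm_eq_abs, abs_div, _root_.abs_of_pos hpos, div_le_one hpos, heq]
  exact abs_sub_le_graphDist

theorem norm_gradient_le_of_le_graphDist [CompleteSpace E] {d : E → ℝ}
    (hd : DifferentiableAt ℝ d x) (hu : DifferentiableAt ℝ u x) (hv : DifferentiableAt ℝ v y)
    (hle : ∀ z w, d z ≤ graphDist u v z w) (heq : d x = graphDist u v x y) (hpos : 0 < d x) :
    ‖gradient d x‖ ≤ ‖gradient u x - gradient v y‖ := by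
  rw [← (toDual ℝ E).norm_map, ← (toDual ℝ E).norm_map, map_sub, toDual_gradient,
    toDual_gradient, toDual_gradient]
  exact hd.hasFDerivAt.norm_le_of_le_graphDist hu.hasFDerivAt hv.hasFDerivAt hle heq hpos

theorem stmt_10_general (n : ℕ)
    (u v : EuclideanSpace ℝ (Fin n) → ℝ) (hu : ContDiff ℝ 1 u) (hv : ContDiff ℝ 1 v)
    (d : EuclideanSpace ℝ (Fin n) → ℝ)
    (hd : ∀ x, d x = ⨅ y : EuclideanSpace ℝ (Fin n),
      Real.sqrt (‖x - y‖ ^ 2 + (u x - v y) ^ 2))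
    (x : EuclideanSpace ℝ (Fin n)) (hdx : DifferentiableAt ℝ d x) (hpos : 0 < d x)
    (y : EuclideanSpace ℝ (Fin n))
    (hy : Real.sqrt (‖x - y‖ ^ 2 + (u x - v y) ^ 2) = d x) :
    ‖gradient d x‖ ≤ ‖gradient u x - gradient v y‖ := by
  have hle : ∀ z w, d z ≤ graphDist u v z w := fun z w =>
    (hd z).trans_le (ciInf_le ⟨0, Set.forall_mem_range.mpr fun _ => Real.sqrt_nonneg _⟩ w)
  exact norm_gradient_le_of_le_graphDist hdx (hu.differentiable one_ne_zero x)
    (hv.differentiable one_ne_zero y) hle hy.symm hpos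

/-- Gradient bound for the distance between two graphs (formula (eq:final-reg-6),
Step 3 of the proof of Proposition 6.4). -/
theorem stmt_10 (n : ℕ) (hn : 1 ≤ n)
    (u v : EuclideanSpace ℝ (Fin n) → ℝ) (hu : ContDiff ℝ 1 u) (hv : ContDiff ℝ 1 v)
    (d : EuclideanSpace ℝ (Fin n) → ℝ)
    (hd : ∀ x, d x = ⨅ y : EuclideanSpace ℝ (Fin n),
      Real.sqrt (‖x - y‖ ^ 2 + (u x - v y) ^ 2))
    (x : EuclideanSpace ℝ (Fin n)) (hdx : DifferentiableAt ℝ d x) (hpos : 0 < d x)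
    (y : EuclideanSpace ℝ (Fin n))
    (hy : Real.sqrt (‖x - y‖ ^ 2 + (u x - v y) ^ 2) = d x) :
    ‖gradient d x‖ ≤ ‖gradient u x - gradient v y‖ :=
  stmt_10_general n u v hu hv d hd x hdx hpos y hy
end
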